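/- Let h ≥ 0 and let ρ, ρ' be h-prefix bisimilar traces of a finite Kripke structure K. Then for every formula ψ of the HS fragment AĀBB̄Ē in positive normal form whose atomic formulas are regular expressions in spec and whose nesting depth of the modality ⟨B⟩ is at most h, K, ρ ⊨ ψ if and only if K, ρ' ⊨ ψ. -/

import Mathlib

/-- A Kripke structure over proposition letters `AP` with states `S`. -/
structure Kripke (AP S : Type) where
  R : S → S → Prop
  μ : S → Set AP
  s0 : S

variable {AP S : Type} {ι : Type} {Q : ι → Type}

/-- A trace is a nonempty finite word over `S` whose consecutive states are related by `R`. -/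
def Kripke.IsTrace (K : Kripke AP S) (ρ : List S) : Prop :=
  ρ ≠ [] ∧ ρ.Chain' K.R

/-- The labeling sequence `μ(ρ)` induced by a trace. -/
def Kripke.labels (K : Kripke AP S) (ρ : List S) : List (Set AP) :=
  ρ.map K.μ

/-- Star-concatenation `w ⋆ w'`: `w` with its last symbol removed, followed by `w'`. -/
def starCat (w w' : List S) : List S := w.dropLast ++ w'

/-- `ν` is a (nonempty) proper prefix of `ρ`. -/
def ProperPref (ν ρ : List S) : Prop :=
  ν ≠ [] ∧ ν <+: ρ ∧ ν.length < ρ.length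

/-- `ν` is a (nonempty) proper suffix of `ρ`. -/
def ProperSuff (ν ρ : List S) : Prop :=
  ν ≠ [] ∧ ν <:+ ρ ∧ ν.length < ρ.length

/-- The summary of a trace `ρ` w.r.t. the canonical NFAs `A ℓ` of the regular expressions of
`spec`: the triple `(fst ρ, Π, lst ρ)` where `Π` collects the pairs `(q, q')` of states of some
automaton `A ℓ` such that there is a run of `A ℓ` from `q` to `q'` over `μ(ρ)`. -/
def Summary [Inhabited S] (K : Kripke AP S) (A : ∀ ℓ : ι, NFA (Set AP) (Q ℓ))
    (ρ : List S) : S × Set (Σ ℓ : ι, Q ℓ × Q ℓ) × S :=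
  (ρ.headI, {p | p.2.2 ∈ (A p.1).evalFrom {p.2.1} (K.labels ρ)}, ρ.getLastI)

/-- `h`-prefix bisimilarity of traces w.r.t. `spec` (given by the canonical NFAs `A`). -/
def PrefixBisim [Inhabited S] (K : Kripke AP S) (A : ∀ ℓ : ι, NFA (Set AP) (Q ℓ)) :
    ℕ → List S → List S → Prop
  | 0, ρ, ρ' => Summary K A ρ = Summary K A ρ'
  | h + 1, ρ, ρ' => Summary K A ρ = Summary K A ρ' ∧
      (∀ ν, ProperPref ν ρ → ∃ ν', ProperPref ν' ρ' ∧ PrefixBisim K A h ν ν') ∧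
      (∀ ν', ProperPref ν' ρ' → ∃ ν, ProperPref ν ρ ∧ PrefixBisim K A h ν ν')

/-- The six (primitive) HS modalities used in the paper. -/
inductive HSMod where
  | A | Abar | B | Bbar | E | Ebar
  deriving DecidableEq

/-- HS formulas whose atomic formulas are indexed by `ι` (regular expressions of `spec`). -/
inductive HS (ι : Type) where
  | atom (ℓ : ι)
  | neg (φ : HS ι)
  | and (φ ψ : HS ι)
  | or (φ ψ : HS ι)
  | dia (X : HSMod) (φ : HS ι)
  | box (X : HSMod) (φ : HS ι)

/-- State-based satisfaction relation `K, ρ ⊨ φ`, where atom `ℓ` denotes the language `L ℓ`. -/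
def HS.sat [Inhabited S] (K : Kripke AP S) (L : ι → Language (Set AP)) :
    HS ι → List S → Prop
  | atom ℓ, ρ => K.labels ρ ∈ L ℓ
  | neg φ, ρ => ¬ φ.sat K L ρ
  | and φ ψ, ρ => φ.sat K L ρ ∧ ψ.sat K L ρ
  | or φ ψ, ρ => φ.sat K L ρ ∨ ψ.sat K L ρ
  | dia HSMod.B φ, ρ => ∃ ν, ProperPref ν ρ ∧ φ.sat K L ν
  | box HSMod.B φ, ρ => ∀ ν, ProperPref ν ρ → φ.sat K L ν
  | dia HSMod.E φ, ρ => ∃ ν, ProperSuff ν ρ ∧ φ.sat K L ν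
  | box HSMod.E φ, ρ => ∀ ν, ProperSuff ν ρ → φ.sat K L ν
  | dia HSMod.Bbar φ, ρ => ∃ ρ', K.IsTrace ρ' ∧ ProperPref ρ ρ' ∧ φ.sat K L ρ'
  | box HSMod.Bbar φ, ρ => ∀ ρ', K.IsTrace ρ' → ProperPref ρ ρ' → φ.sat K L ρ'
  | dia HSMod.Ebar φ, ρ => ∃ ρ', K.IsTrace ρ' ∧ ProperSuff ρ ρ' ∧ φ.sat K L ρ'
  | box HSMod.Ebar φ, ρ => ∀ ρ', K.IsTrace ρ' → ProperSuff ρ ρ' → φ.sat K L ρ'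
  | dia HSMod.A φ, ρ => ∃ ρ', K.IsTrace ρ' ∧ ρ'.headI = ρ.getLastI ∧ φ.sat K L ρ'
  | box HSMod.A φ, ρ => ∀ ρ', K.IsTrace ρ' → ρ'.headI = ρ.getLastI → φ.sat K L ρ'
  | dia HSMod.Abar φ, ρ => ∃ ρ', K.IsTrace ρ' ∧ ρ'.getLastI = ρ.headI ∧ φ.sat K L ρ'
  | box HSMod.Abar φ, ρ => ∀ ρ', K.IsTrace ρ' → ρ'.getLastI = ρ.headI → φ.sat K L ρ'

/-- Nesting depth of the modality `⟨B⟩` (and `[B]`). -/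
def HS.depthB : HS ι → ℕ
  | atom _ => 0
  | neg φ => φ.depthB
  | and φ ψ => max φ.depthB ψ.depthB
  | or φ ψ => max φ.depthB ψ.depthB
  | dia HSMod.B φ => φ.depthB + 1
  | box HSMod.B φ => φ.depthB + 1
  | dia _ φ => φ.depthB
  | box _ φ => φ.depthB

/-- Positive normal form: negation is applied only to atomic formulas. -/
def HS.IsPNF : HS ι → Prop
  | atom _ => True
  | neg (atom _) => True
  | neg _ => False
  | and φ ψ => φ.IsPNF ∧ ψ.IsPNF
  | or φ ψ => φ.IsPNF ∧ ψ.IsPNF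
  | dia _ φ => φ.IsPNF
  | box _ φ => φ.IsPNF

/-- Membership in the fragment `AĀBB̄Ē`: no occurrence of `⟨E⟩`/`[E]`. -/
def HS.NoE : HS ι → Prop
  | atom _ => True
  | neg φ => φ.NoE
  | and φ ψ => φ.NoE ∧ ψ.NoE
  | or φ ψ => φ.NoE ∧ ψ.NoE
  | dia HSMod.E _ => False
  | box HSMod.E _ => False
  | dia _ φ => φ.NoE
  | box _ φ => φ.NoE

/-- Size of an HS formula. -/
def HS.size : HS ι → ℕ
  | atom _ => 1
  | neg φ => φ.size + 1
  | and φ ψ => φ.size + ψ.size + 1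
  | or φ ψ => φ.size + ψ.size + 1
  | dia _ φ => φ.size + 1
  | box _ φ => φ.size + 1

/-- The prefix-skeleton sampling of `ρ` in the interval `[i, j]` of (1-based) `ρ`-positions:
`{i, j}` together with the minimal positions in `[i+1, j-1]` realizing each prefix summary. -/
def Skel [Inhabited S] (K : Kripke AP S) (A : ∀ ℓ : ι, NFA (Set AP) (Q ℓ))
    (ρ : List S) (i j : ℕ) : Set ℕ :=
  {i, j} ∪ {k' | k' ∈ Set.Icc (i + 1) (j - 1) ∧
      ∀ k ∈ Set.Icc (i + 1) (j - 1),
        Summary K A (ρ.take k) = Summary K A (ρ.take k') → k' ≤ k}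

/-- The `h`-prefix sampling `PS_h` of a trace `ρ` (positions are 1-based). -/
def PS [Inhabited S] (K : Kripke AP S) (A : ∀ ℓ : ι, NFA (Set AP) (Q ℓ))
    (ρ : List S) : ℕ → Set ℕ
  | 0 => {1, ρ.length}
  | h + 1 => PS K A ρ h ∪ {k | ∃ i ∈ PS K A ρ h, ∃ j ∈ PS K A ρ h, i < j ∧
      (∀ m ∈ PS K A ρ h, m ≤ i ∨ j ≤ m) ∧ k ∈ Skel K A ρ i j}

/-- The `h`-sampling word of `ρ`: the sequence of prefix summaries at the positions of `PS_h`,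
listed in increasing order. -/
noncomputable def samplingWord [Inhabited S] (K : Kripke AP S)
    (A : ∀ ℓ : ι, NFA (Set AP) (Q ℓ)) (ρ : List S) (h : ℕ) :
    List (S × Set (Σ ℓ : ι, Q ℓ × Q ℓ) × S) :=
  ((List.range (ρ.length + 1)).filter
      (fun i => @decide (i ∈ PS K A ρ h) (Classical.propDecidable _))).map
    (fun i => Summary K A (ρ.take i))

/-- `π` is a trace induced by `ρ`: `π` is obtained by selecting a strictly increasing sequence
of `ρ`-positions starting at the first and ending at the last position, and `π` is a trace. -/
def InducedTrace [Inhabited S] (K : Kripke AP S) (ρ π : List S) : Prop :=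
  K.IsTrace π ∧ ∃ is : List ℕ, is.Chain' (· < ·) ∧ is.head? = some 0 ∧
    is.getLast? = some (ρ.length - 1) ∧ π = is.map (fun i => ρ.getD i default)

/-- Propositional formulas over `AP`. -/
inductive PropForm (AP : Type) where
  | tru
  | var (p : AP)
  | not (φ : PropForm AP)
  | and (φ ψ : PropForm AP)

/-- Satisfaction of a propositional formula by a letter `A ∈ 2^AP`. -/
def PropForm.Sat : PropForm AP → Set AP → Prop
  | tru, _ => True
  | var p, a => p ∈ a
  | not φ, a => ¬ φ.Sat a
  | and φ ψ, a => φ.Sat a ∧ ψ.Sat a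

/-- Propositional-based regular expressions over `AP`. -/
inductive PRE (AP : Type) where
  | eps
  | atom (φ : PropForm AP)
  | union (r s : PRE AP)
  | cat (r s : PRE AP)
  | star (r : PRE AP)

/-- The size of a regular expression: its number of subexpressions. -/
def PRE.size : PRE AP → ℕ
  | eps => 1
  | atom _ => 1
  | union r s => r.size + s.size + 1
  | cat r s => r.size + s.size + 1
  | star r => r.size + 1

/-- The language of finite words over `2^AP` denoted by a regular expression. -/
def PRE.lang : PRE AP → Language (Set AP)
  | eps => 1
  | atom φ => {w | ∃ a, φ.Sat a ∧ w = [a]}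
  | union r s => r.lang + s.lang
  | cat r s => r.lang * s.lang
  | star r => KStar.kstar r.lang

section Stmt6Aux

variable [Inhabited S] {K : Kripke AP S} {A : ∀ ℓ : ι, NFA (Set AP) (Q ℓ)}

private lemma nfa_evalFrom_append {α σ : Type*} (M : NFA α σ) (T : Set σ) (w w' : List α) :
    M.evalFrom T (w ++ w') = M.evalFrom (M.evalFrom T w) w' :=
  List.foldl_append

private lemma nfa_mem_evalFrom_iff {α σ : Type*} (M : NFA α σ) (T : Set σ) (w : List α)
    (q' : σ) : q' ∈ M.evalFrom T w ↔ ∃ q ∈ T, q' ∈ M.evalFrom {q} w := by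
  induction w generalizing T with
  | nil => simp [NFA.evalFrom_nil]
  | cons a w ih =>
    rw [show M.evalFrom T (a :: w) = M.evalFrom (M.stepSet T a) w from rfl, ih]
    constructor
    · rintro ⟨q1, hq1, h⟩
      rw [NFA.mem_stepSet] at hq1
      obtain ⟨q, hq, hstep⟩ := hq1
      refine ⟨q, hq, ?_⟩
      rw [show M.evalFrom {q} (a :: w) = M.evalFrom (M.stepSet {q} a) w from rfl, ih]
      refine ⟨q1, ?_, h⟩
      rw [NFA.mem_stepSet]
      exact ⟨q, rfl, hstep⟩
    · rintro ⟨q, hq, h⟩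
      rw [show M.evalFrom {q} (a :: w) = M.evalFrom (M.stepSet {q} a) w from rfl, ih] at h
      obtain ⟨q1, hq1, h⟩ := h
      rw [NFA.mem_stepSet] at hq1
      obtain ⟨q2, hq2, hstep⟩ := hq1
      refine ⟨q1, ?_, h⟩
      rw [NFA.mem_stepSet]
      exact ⟨q, hq, by cases hq2; exact hstep⟩

private lemma headI_append_of_ne_nil {l m : List S} (hl : l ≠ []) :
    (l ++ m).headI = l.headI := by
  cases l with
  | nil => exact absurd rfl hl
  | cons a t => rfl

private lemma getLastI_append_of_ne_nil {l m : List S} (hm : m ≠ []) :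
    (l ++ m).getLastI = m.getLastI := by
  rw [List.getLastI_eq_getLast?, List.getLastI_eq_getLast?,
    List.getLast?_append_of_ne_nil _ hm]

private lemma getLast?_eq_getLastI {l : List S} (hl : l ≠ []) :
    l.getLast? = some l.getLastI := by
  rw [List.getLastI_eq_getLast?]
  cases h : l.getLast? with
  | none => exact absurd (List.getLast?_eq_none_iff.mp h) hl
  | some a => rfl

private lemma head?_eq_headI {l : List S} (hl : l ≠ []) :
    l.head? = some l.headI := by
  cases l with
  | nil => exact absurd rfl hl
  | cons a t => rfl

private lemma mem_pi_iff (ρ : List S) (ℓ : ι) (q q' : Q ℓ) :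
    (⟨ℓ, q, q'⟩ : Σ ℓ : ι, Q ℓ × Q ℓ) ∈ (Summary K A ρ).2.1 ↔
      q' ∈ (A ℓ).evalFrom {q} (K.labels ρ) := Iff.rfl

private lemma accepts_congr {ρ ρ' : List S}
    (hPi : (Summary K A ρ).2.1 = (Summary K A ρ').2.1) (ℓ : ι) :
    K.labels ρ ∈ (A ℓ).accepts ↔ K.labels ρ' ∈ (A ℓ).accepts := by
  simp only [NFA.mem_accepts]
  constructor
  · rintro ⟨q, hq, hev⟩
    obtain ⟨q0, hq0, h⟩ := (nfa_mem_evalFrom_iff _ _ _ _).mp hev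
    have h2 : (⟨ℓ, q0, q⟩ : Σ ℓ : ι, Q ℓ × Q ℓ) ∈ (Summary K A ρ').2.1 := hPi ▸ h
    exact ⟨q, hq, (nfa_mem_evalFrom_iff _ _ _ _).mpr ⟨q0, hq0, h2⟩⟩
  · rintro ⟨q, hq, hev⟩
    obtain ⟨q0, hq0, h⟩ := (nfa_mem_evalFrom_iff _ _ _ _).mp hev
    have h2 : (⟨ℓ, q0, q⟩ : Σ ℓ : ι, Q ℓ × Q ℓ) ∈ (Summary K A ρ).2.1 := hPi ▸ h
    exact ⟨q, hq, (nfa_mem_evalFrom_iff _ _ _ _).mpr ⟨q0, hq0, h2⟩⟩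

private lemma summary_append_right {ρ ρ' σ : List S} (hρ : ρ ≠ []) (hρ' : ρ' ≠ [])
    (hσ : σ ≠ []) (hS : Summary K A ρ = Summary K A ρ') :
    Summary K A (ρ ++ σ) = Summary K A (ρ' ++ σ) := by
  have h1 : ρ.headI = ρ'.headI := congrArg Prod.fst hS
  have hPi : (Summary K A ρ).2.1 = (Summary K A ρ').2.1 := congrArg (fun x => x.2.1) hS
  have hlab : ∀ τ τ' : List S, K.labels (τ ++ τ') = K.labels τ ++ K.labels τ' :=
    fun τ τ' => List.map_append
  unfold Summary
  refine Prod.ext ?_ (Prod.ext ?_ ?_)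
  · simpa [headI_append_of_ne_nil hρ, headI_append_of_ne_nil hρ'] using h1
  · ext p
    obtain ⟨ℓ, q, q'⟩ := p
    simp only [Set.mem_setOf_eq, hlab, nfa_evalFrom_append, nfa_mem_evalFrom_iff _ (_root_.NFA.evalFrom _ _ _)]
    constructor
    · rintro ⟨q1, hq1, h⟩
      exact ⟨q1, (Set.ext_iff.mp hPi ⟨ℓ, q, q1⟩).mp hq1, h⟩
    · rintro ⟨q1, hq1, h⟩
      exact ⟨q1, (Set.ext_iff.mp hPi ⟨ℓ, q, q1⟩).mpr hq1, h⟩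
  · simp [getLastI_append_of_ne_nil hσ]

private lemma summary_append_left {τ ρ ρ' : List S} (hτ : τ ≠ []) (hρ : ρ ≠ [])
    (hρ' : ρ' ≠ []) (hS : Summary K A ρ = Summary K A ρ') :
    Summary K A (τ ++ ρ) = Summary K A (τ ++ ρ') := by
  have h2 : ρ.getLastI = ρ'.getLastI := congrArg (fun x => x.2.2) hS
  have hPi : (Summary K A ρ).2.1 = (Summary K A ρ').2.1 := congrArg (fun x => x.2.1) hS
  have hlab : ∀ τ τ' : List S, K.labels (τ ++ τ') = K.labels τ ++ K.labels τ' :=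
    fun τ τ' => List.map_append
  unfold Summary
  refine Prod.ext ?_ (Prod.ext ?_ ?_)
  · simp [headI_append_of_ne_nil hτ]
  · ext p
    obtain ⟨ℓ, q, q'⟩ := p
    simp only [Set.mem_setOf_eq, hlab, nfa_evalFrom_append, nfa_mem_evalFrom_iff _ (_root_.NFA.evalFrom _ _ _)]
    constructor
    · rintro ⟨q1, hq1, h⟩
      exact ⟨q1, hq1, (Set.ext_iff.mp hPi ⟨ℓ, q1, q'⟩).mp h⟩
    · rintro ⟨q1, hq1, h⟩
      exact ⟨q1, hq1, (Set.ext_iff.mp hPi ⟨ℓ, q1, q'⟩).mpr h⟩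
  · simpa [getLastI_append_of_ne_nil hρ, getLastI_append_of_ne_nil hρ'] using h2

private lemma bisim_summary : ∀ {h : ℕ} {ρ ρ' : List S},
    PrefixBisim K A h ρ ρ' → Summary K A ρ = Summary K A ρ'
  | 0, _, _, hb => hb
  | _ + 1, _, _, hb => hb.1

private lemma bisim_refl : ∀ (h : ℕ) (ρ : List S), PrefixBisim K A h ρ ρ
  | 0, _ => rfl
  | h + 1, ρ => ⟨rfl, fun ν hν => ⟨ν, hν, bisim_refl h ν⟩, fun ν hν => ⟨ν, hν, bisim_refl h ν⟩⟩

private lemma bisim_symm : ∀ {h : ℕ} {ρ ρ' : List S},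
    PrefixBisim K A h ρ ρ' → PrefixBisim K A h ρ' ρ
  | 0, _, _, hb => hb.symm
  | h + 1, ρ, ρ', ⟨hs, h1, h2⟩ =>
    ⟨hs.symm,
      fun ν hν => let ⟨ν', hν', hb⟩ := h2 ν hν; ⟨ν', hν', bisim_symm hb⟩,
      fun ν hν => let ⟨ν', hν', hb⟩ := h1 ν hν; ⟨ν', hν', bisim_symm hb⟩⟩

private lemma bisim_mono : ∀ {h : ℕ} {ρ ρ' : List S},
    PrefixBisim K A (h + 1) ρ ρ' → PrefixBisim K A h ρ ρ'
  | 0, _, _, hb => hb.1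
  | h + 1, ρ, ρ', ⟨hs, h1, h2⟩ =>
    ⟨hs,
      fun ν hν => let ⟨ν', hν', hb⟩ := h1 ν hν; ⟨ν', hν', bisim_mono hb⟩,
      fun ν hν => let ⟨ν', hν', hb⟩ := h2 ν hν; ⟨ν', hν', bisim_mono hb⟩⟩

private lemma properPref_append_cases {ν ρ σ : List S} (h : ProperPref ν (ρ ++ σ)) :
    (ν ≠ [] ∧ ν <+: ρ) ∨ ∃ σ₁, ν = ρ ++ σ₁ ∧ ProperPref σ₁ σ := by
  obtain ⟨hne, hpre, hlen⟩ := h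
  by_cases hle : ν.length ≤ ρ.length
  · exact Or.inl ⟨hne, List.prefix_of_prefix_length_le hpre (List.prefix_append ρ σ) hle⟩
  · push_neg at hle
    have hρν : ρ <+: ν := List.prefix_of_prefix_length_le (List.prefix_append ρ σ) hpre hle.le
    obtain ⟨σ₁, rfl⟩ := hρν
    refine Or.inr ⟨σ₁, rfl, ?_, ?_, ?_⟩
    · intro hc; subst hc; simp at hle
    · exact ((List.prefix_append_right_inj ρ).mp hpre)
    · simpa using hlen

private lemma properPref_extend {ν ρ' σ : List S} (hν : ProperPref ν ρ') :
    ProperPref ν (ρ' ++ σ) :=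
  ⟨hν.1, hν.2.1.trans (List.prefix_append ρ' σ),
    lt_of_lt_of_le hν.2.2 (by simp)⟩

private lemma properPref_append_self {ρ' σ : List S} (hρ' : ρ' ≠ []) (hσ : σ ≠ []) :
    ProperPref ρ' (ρ' ++ σ) :=
  ⟨hρ', List.prefix_append ρ' σ, by
    simp [List.length_append, List.length_pos_iff.mpr hσ]⟩

private lemma properPref_append_both {ρ' σ₁ σ : List S} (hρ' : ρ' ≠ [])
    (h : ProperPref σ₁ σ) : ProperPref (ρ' ++ σ₁) (ρ' ++ σ) :=
  ⟨by simp [hρ'], (List.prefix_append_right_inj ρ').mpr h.2.1, by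
    simpa using h.2.2⟩

private lemma bisim_append_right : ∀ (h : ℕ) (ρ ρ' σ : List S), ρ ≠ [] → ρ' ≠ [] → σ ≠ [] →
    PrefixBisim K A h ρ ρ' → PrefixBisim K A h (ρ ++ σ) (ρ' ++ σ)
  | 0, ρ, ρ', σ, hρ, hρ', hσ, hb => summary_append_right hρ hρ' hσ hb
  | h + 1, ρ, ρ', σ, hρ, hρ', hσ, hb => by
    obtain ⟨hs, h1, h2⟩ := hb
    refine ⟨summary_append_right hρ hρ' hσ hs, ?_, ?_⟩
    · intro ν hν
      rcases properPref_append_cases hν with ⟨hne, hpre⟩ | ⟨σ₁, rfl, hσ₁⟩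
      · rcases lt_or_eq_of_le hpre.length_le with hlt | heq
        · obtain ⟨ν', hν', hbν⟩ := h1 ν ⟨hne, hpre, hlt⟩
          exact ⟨ν', properPref_extend hν', hbν⟩
        · have : ν = ρ := hpre.eq_of_length heq
          subst this
          exact ⟨ρ', properPref_append_self hρ' hσ, bisim_mono ⟨hs, h1, h2⟩⟩
      · exact ⟨ρ' ++ σ₁, properPref_append_both hρ' hσ₁,
          bisim_append_right h ρ ρ' σ₁ hρ hρ' hσ₁.1 (bisim_mono ⟨hs, h1, h2⟩)⟩
    · intro ν hν
      rcases properPref_append_cases hν with ⟨hne, hpre⟩ | ⟨σ₁, rfl, hσ₁⟩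
      · rcases lt_or_eq_of_le hpre.length_le with hlt | heq
        · obtain ⟨ν', hν', hbν⟩ := h2 ν ⟨hne, hpre, hlt⟩
          exact ⟨ν', properPref_extend hν', hbν⟩
        · have : ν = ρ' := hpre.eq_of_length heq
          subst this
          exact ⟨ρ, properPref_append_self hρ hσ, bisim_mono ⟨hs, h1, h2⟩⟩
      · exact ⟨ρ ++ σ₁, properPref_append_both hρ hσ₁,
          bisim_append_right h ρ ρ' σ₁ hρ hρ' hσ₁.1 (bisim_mono ⟨hs, h1, h2⟩)⟩

private lemma bisim_append_left : ∀ (h : ℕ) (τ ρ ρ' : List S), τ ≠ [] → ρ ≠ [] → ρ' ≠ [] →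
    PrefixBisim K A h ρ ρ' → PrefixBisim K A h (τ ++ ρ) (τ ++ ρ')
  | 0, τ, ρ, ρ', hτ, hρ, hρ', hb => summary_append_left hτ hρ hρ' hb
  | h + 1, τ, ρ, ρ', hτ, hρ, hρ', hb => by
    obtain ⟨hs, h1, h2⟩ := hb
    refine ⟨summary_append_left hτ hρ hρ' hs, ?_, ?_⟩
    · intro ν hν
      rcases properPref_append_cases hν with ⟨hne, hpre⟩ | ⟨ρ₁, rfl, hρ₁⟩
      · refine ⟨ν, ⟨hne, hpre.trans (List.prefix_append τ ρ'),
          lt_of_le_of_lt hpre.length_le (by simp [List.length_pos_iff.mpr hρ'])⟩,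
          bisim_refl h ν⟩
      · obtain ⟨ρ₁', hρ₁', hbν⟩ := h1 ρ₁ hρ₁
        exact ⟨τ ++ ρ₁', properPref_append_both hτ hρ₁',
          bisim_append_left h τ ρ₁ ρ₁' hτ hρ₁.1 hρ₁'.1 hbν⟩
    · intro ν hν
      rcases properPref_append_cases hν with ⟨hne, hpre⟩ | ⟨ρ₁', rfl, hρ₁'⟩
      · refine ⟨ν, ⟨hne, hpre.trans (List.prefix_append τ ρ),
          lt_of_le_of_lt hpre.length_le (by simp [List.length_pos_iff.mpr hρ])⟩,
          bisim_refl h ν⟩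
      · obtain ⟨ρ₁, hρ₁, hbν⟩ := h2 ρ₁' hρ₁'
        exact ⟨τ ++ ρ₁, properPref_append_both hτ hρ₁,
          bisim_append_left h τ ρ₁ ρ₁' hτ hρ₁.1 hρ₁'.1 hbν⟩

end Stmt6Aux

section Stmt6Main

variable [Inhabited S] {K : Kripke AP S} {A : ∀ ℓ : ι, NFA (Set AP) (Q ℓ)}

private lemma trace_of_properPref {ν ρ : List S} (hρ : K.IsTrace ρ) (hν : ProperPref ν ρ) :
    K.IsTrace ν := ⟨hν.1, hρ.2.prefix hν.2.1⟩

private lemma sat_imp (L : ι → Language (Set AP)) (hacc : ∀ ℓ, (A ℓ).accepts = L ℓ) :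
    ∀ (ψ : HS ι), ψ.IsPNF → ψ.NoE → ∀ (h : ℕ) (ρ ρ' : List S),
      K.IsTrace ρ → K.IsTrace ρ' → PrefixBisim K A h ρ ρ' → ψ.depthB ≤ h →
      ψ.sat K L ρ → ψ.sat K L ρ' := by
  intro ψ
  induction ψ with
  | atom ℓ =>
    intro _ _ h ρ ρ' hρ hρ' hbis _ hsat
    have hPi : (Summary K A ρ).2.1 = (Summary K A ρ').2.1 :=
      congrArg (fun x => x.2.1) (bisim_summary hbis)
    have := accepts_congr (K := K) hPi ℓ
    rw [hacc ℓ] at this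
    exact this.mp hsat
  | neg φ ihφ =>
    intro hpnf hnoE h ρ ρ' hρ hρ' hbis hd hsat
    cases φ with
    | atom ℓ =>
      have hPi : (Summary K A ρ).2.1 = (Summary K A ρ').2.1 :=
        congrArg (fun x => x.2.1) (bisim_summary hbis)
      have := accepts_congr (K := K) hPi ℓ
      rw [hacc ℓ] at this
      exact fun hc => hsat (this.mpr hc)
    | neg _ => exact hpnf.elim
    | and _ _ => exact hpnf.elim
    | or _ _ => exact hpnf.elim
    | dia _ _ => exact hpnf.elim
    | box _ _ => exact hpnf.elim
  | and φ χ ihφ ihχ =>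
    intro hpnf hnoE h ρ ρ' hρ hρ' hbis hd hsat
    exact ⟨ihφ hpnf.1 hnoE.1 h ρ ρ' hρ hρ' hbis (le_trans (le_max_left _ _) hd) hsat.1,
      ihχ hpnf.2 hnoE.2 h ρ ρ' hρ hρ' hbis (le_trans (le_max_right _ _) hd) hsat.2⟩
  | or φ χ ihφ ihχ =>
    intro hpnf hnoE h ρ ρ' hρ hρ' hbis hd hsat
    exact hsat.imp (ihφ hpnf.1 hnoE.1 h ρ ρ' hρ hρ' hbis (le_trans (le_max_left _ _) hd))
      (ihχ hpnf.2 hnoE.2 h ρ ρ' hρ hρ' hbis (le_trans (le_max_right _ _) hd))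
  | dia X φ ihφ =>
    intro hpnf hnoE h ρ ρ' hρ hρ' hbis hd hsat
    have hs := bisim_summary hbis
    have hhead : ρ.headI = ρ'.headI := congrArg Prod.fst hs
    have hlast : ρ.getLastI = ρ'.getLastI := congrArg (fun x => x.2.2) hs
    cases X with
    | A =>
      obtain ⟨ρ₂, ht, heq, hφ⟩ := hsat
      exact ⟨ρ₂, ht, heq.trans hlast, hφ⟩
    | Abar =>
      obtain ⟨ρ₂, ht, heq, hφ⟩ := hsat
      exact ⟨ρ₂, ht, heq.trans hhead, hφ⟩
    | E => exact hnoE.elim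
    | B =>
      cases h with
      | zero => exact absurd hd (by simp [HS.depthB])
      | succ k =>
        obtain ⟨_, h1, _⟩ := hbis
        obtain ⟨ν, hν, hφ⟩ := hsat
        obtain ⟨ν', hν', hbν⟩ := h1 ν hν
        have hdφ : φ.depthB ≤ k := Nat.succ_le_succ_iff.mp hd
        exact ⟨ν', hν', ihφ hpnf hnoE k ν ν' (trace_of_properPref hρ hν)
          (trace_of_properPref hρ' hν') hbν hdφ hφ⟩
    | Bbar =>
      obtain ⟨ρ₂, ht, hpp, hφ⟩ := hsat
      obtain ⟨τ, rfl⟩ := hpp.2.1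
      have hτ : τ ≠ [] := by
        intro hc; subst hc; simp at hpp; exact absurd rfl (ne_of_lt hpp.2.2)
      have htr' : K.IsTrace (ρ' ++ τ) := by
        refine ⟨by simp [hρ'.1], ?_⟩
        show List.IsChain _ (_ ++ _)
        rw [List.isChain_append]
        have := List.isChain_append.mp ht.2
        refine ⟨hρ'.2, this.2.1, ?_⟩
        intro x hx y hy
        apply this.2.2 x _ y hy
        rw [getLast?_eq_getLastI hρ.1, hlast, ← getLast?_eq_getLastI hρ'.1]
        exact hx
      refine ⟨ρ' ++ τ, htr', properPref_append_self hρ'.1 hτ, ?_⟩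
      exact ihφ hpnf hnoE h (ρ ++ τ) (ρ' ++ τ) ht htr'
        (bisim_append_right h ρ ρ' τ hρ.1 hρ'.1 hτ hbis) hd hφ
    | Ebar =>
      obtain ⟨ρ₂, ht, hps, hφ⟩ := hsat
      obtain ⟨τ, rfl⟩ := hps.2.1
      have hτ : τ ≠ [] := by
        intro hc; subst hc; simp at hps; exact absurd rfl (ne_of_lt hps.2.2)
      have htr' : K.IsTrace (τ ++ ρ') := by
        refine ⟨by simp [hτ], ?_⟩
        show List.IsChain _ (_ ++ _)
        rw [List.isChain_append]
        have := List.isChain_append.mp ht.2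
        refine ⟨this.1, hρ'.2, ?_⟩
        intro x hx y hy
        apply this.2.2 x hx y
        rw [head?_eq_headI hρ.1, hhead, ← head?_eq_headI hρ'.1]
        exact hy
      refine ⟨τ ++ ρ', htr', ⟨hρ'.1, ⟨τ, rfl⟩, by simp [List.length_pos_iff.mpr hτ]⟩, ?_⟩
      exact ihφ hpnf hnoE h (τ ++ ρ) (τ ++ ρ') ht htr'
        (bisim_append_left h τ ρ ρ' hτ hρ.1 hρ'.1 hbis) hd hφ
  | box X φ ihφ =>
    intro hpnf hnoE h ρ ρ' hρ hρ' hbis hd hsat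
    have hs := bisim_summary hbis
    have hhead : ρ.headI = ρ'.headI := congrArg Prod.fst hs
    have hlast : ρ.getLastI = ρ'.getLastI := congrArg (fun x => x.2.2) hs
    cases X with
    | A =>
      intro ρ₂ ht heq
      exact hsat ρ₂ ht (heq.trans hlast.symm)
    | Abar =>
      intro ρ₂ ht heq
      exact hsat ρ₂ ht (heq.trans hhead.symm)
    | E => exact hnoE.elim
    | B =>
      cases h with
      | zero => exact absurd hd (by simp [HS.depthB])
      | succ k =>
        obtain ⟨_, _, h2⟩ := hbis
        intro ν' hν'
        obtain ⟨ν, hν, hbν⟩ := h2 ν' hν'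
        have hdφ : φ.depthB ≤ k := Nat.succ_le_succ_iff.mp hd
        exact ihφ hpnf hnoE k ν ν' (trace_of_properPref hρ hν)
          (trace_of_properPref hρ' hν') hbν hdφ (hsat ν hν)
    | Bbar =>
      intro ρ₂ ht hpp
      obtain ⟨τ, rfl⟩ := hpp.2.1
      have hτ : τ ≠ [] := by
        intro hc; subst hc; simp at hpp; exact absurd rfl (ne_of_lt hpp.2.2)
      have htr : K.IsTrace (ρ ++ τ) := by
        refine ⟨by simp [hρ.1], ?_⟩
        show List.IsChain _ (_ ++ _)
        rw [List.isChain_append]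
        have := List.isChain_append.mp ht.2
        refine ⟨hρ.2, this.2.1, ?_⟩
        intro x hx y hy
        apply this.2.2 x _ y hy
        rw [getLast?_eq_getLastI hρ'.1, ← hlast, ← getLast?_eq_getLastI hρ.1]
        exact hx
      exact ihφ hpnf hnoE h (ρ ++ τ) (ρ' ++ τ) htr ht
        (bisim_append_right h ρ ρ' τ hρ.1 hρ'.1 hτ hbis) hd
        (hsat (ρ ++ τ) htr (properPref_append_self hρ.1 hτ))
    | Ebar =>
      intro ρ₂ ht hps
      obtain ⟨τ, rfl⟩ := hps.2.1
      have hτ : τ ≠ [] := by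
        intro hc; subst hc; simp at hps; exact absurd rfl (ne_of_lt hps.2.2)
      have htr : K.IsTrace (τ ++ ρ) := by
        refine ⟨by simp [hτ], ?_⟩
        show List.IsChain _ (_ ++ _)
        rw [List.isChain_append]
        have := List.isChain_append.mp ht.2
        refine ⟨this.1, hρ.2, ?_⟩
        intro x hx y hy
        apply this.2.2 x hx y
        rw [head?_eq_headI hρ'.1, ← hhead, ← head?_eq_headI hρ.1]
        exact hy
      exact ihφ hpnf hnoE h (τ ++ ρ) (τ ++ ρ') htr ht
        (bisim_append_left h τ ρ ρ' hτ hρ.1 hρ'.1 hbis) hd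
        (hsat (τ ++ ρ) htr ⟨hρ.1, ⟨τ, rfl⟩, by simp [List.length_pos_iff.mpr hτ]⟩)

end Stmt6Main

/-- `h`-prefix bisimilar traces satisfy the same `AĀBB̄Ē` formulas in PNF with
atoms in `spec` and `⟨B⟩`-nesting depth at most `h`. -/
theorem stmt6 [Inhabited S] (K : Kripke AP S) (A : ∀ ℓ : ι, NFA (Set AP) (Q ℓ))
    (L : ι → Language (Set AP)) (hacc : ∀ ℓ, (A ℓ).accepts = L ℓ)
    (h : ℕ) (ρ ρ' : List S) (hρ : K.IsTrace ρ) (hρ' : K.IsTrace ρ')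
    (hbis : PrefixBisim K A h ρ ρ')
    (ψ : HS ι) (hpnf : ψ.IsPNF) (hnoE : ψ.NoE) (hd : ψ.depthB ≤ h) :
    ψ.sat K L ρ ↔ ψ.sat K L ρ' :=
  ⟨sat_imp L hacc ψ hpnf hnoE h ρ ρ' hρ hρ' hbis hd,
   sat_imp L hacc ψ hpnf hnoE h ρ' ρ hρ' hρ (bisim_symm hbis) hd⟩
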